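/- Let φ : S → L^p(Ω) be a summative and separating map on a tree S ⊆ ℕ* whose range has dense linear span, and let M, N be disjointly supported complementary subspaces of L^p(Ω). Then P_M ∘ φ is summative, separating, and its range has dense linear span in M. -/

import Mathlib

/-!
Because `M` and `N` are disjointly supported and span everything, writing `f = m + n` with
`m ∈ M`, `n ∈ N` shows that `P f = m` agrees, at almost every point, with either `f` or `0`.
Hence `P` is a contraction (so continuous, and summation passes through it) and it cannot
enlarge supports (so separation is preserved). Finally `P` maps the dense span of `φ(S)` onto
the span of `P ∘ φ(S)`, whose closure therefore contains `P f = f` for every `f ∈ M`.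
-/

open MeasureTheory

/-- `S ⊆ ℕ*` is a tree: closed under initial segments. -/
def IsTree (S : Set (List ℕ)) : Prop :=
  ∀ ν ∈ S, ∀ ν' : List ℕ, ν' <+: ν → ν' ∈ S

/-- `φ` is summative on `S`: for every nonterminal `ν ∈ S`, `φ ν` is the sum of the values
of `φ` at the children of `ν` in `S`. -/
def Summative {α : Type*} [MeasurableSpace α] {μ : Measure α} {p : ENNReal}
    [Fact (1 ≤ p)] (S : Set (List ℕ)) (φ : List ℕ → Lp ℂ p μ) : Prop :=
  ∀ ν ∈ S, (∃ k : ℕ, ν ++ [k] ∈ S) →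
    HasSum (fun k : {k : ℕ // ν ++ [k] ∈ S} => φ (ν ++ [k.1])) (φ ν)

/-- `φ` is separating on `S`: values at incomparable nodes are disjointly supported. -/
def Separating {α : Type*} [MeasurableSpace α] {μ : Measure α} {p : ENNReal}
    (S : Set (List ℕ)) (φ : List ℕ → Lp ℂ p μ) : Prop :=
  ∀ ν ∈ S, ∀ ν' ∈ S, ¬ ν <+: ν' → ¬ ν' <+: ν →
    (φ ν : _ → ℂ) * (φ ν' : _ → ℂ) =ᵐ[μ] 0

section

variable {α : Type*} [MeasurableSpace α] {μ : Measure α} {p : ENNReal}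

theorem Lp.projection_ae_eq_zero_or_eq [Fact (1 ≤ p)] {M N : Submodule ℂ (Lp ℂ p μ)}
    (hdisj : ∀ f ∈ M, ∀ g ∈ N, (f : α → ℂ) * (g : α → ℂ) =ᵐ[μ] 0) (hsup : M ⊔ N = ⊤)
    {P : Lp ℂ p μ →ₗ[ℂ] Lp ℂ p μ} (hPM : ∀ f ∈ M, P f = f) (hPN : ∀ f ∈ N, P f = 0)
    (f : Lp ℂ p μ) : ∀ᵐ x ∂μ, (P f : α → ℂ) x = 0 ∨ (P f : α → ℂ) x = (f : α → ℂ) x := by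
  obtain ⟨m, hm, n, hn, rfl⟩ := Submodule.mem_sup.mp (hsup ▸ Submodule.mem_top (x := f))
  rw [map_add, hPM m hm, hPN n hn, add_zero]
  filter_upwards [hdisj m hm n hn, Lp.coeFn_add m n] with x hmn hadd
  rcases mul_eq_zero.mp hmn with hm0 | hn0
  · exact Or.inl hm0
  · exact Or.inr (by rw [hadd, Pi.add_apply, hn0, add_zero])

theorem Lp.norm_le_of_ae_eq_zero_or_eq {E : Type*} [NormedAddCommGroup E] {f g : Lp E p μ}
    (h : ∀ᵐ x ∂μ, (g : α → E) x = 0 ∨ (g : α → E) x = (f : α → E) x) : ‖g‖ ≤ ‖f‖ :=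
  Lp.norm_le_norm_of_ae_le <| h.mono fun x hx => by rcases hx with hx | hx <;> simp [hx]

theorem Summative.map [Fact (1 ≤ p)] {β : Type*} [MeasurableSpace β] {ν : Measure β}
    {q : ENNReal} [Fact (1 ≤ q)] {S : Set (List ℕ)} {φ : List ℕ → Lp ℂ p μ}
    (hφ : Summative S φ) (T : Lp ℂ p μ →L[ℂ] Lp ℂ q ν) : Summative S (fun v => T (φ v)) :=
  fun v hv hchild => (hφ v hv hchild).mapL T

theorem Separating.of_ae_eq_zero_or_eq {S : Set (List ℕ)} {φ ψ : List ℕ → Lp ℂ p μ}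
    (hφ : Separating S φ)
    (hψ : ∀ v, ∀ᵐ x ∂μ, (ψ v : α → ℂ) x = 0 ∨ (ψ v : α → ℂ) x = (φ v : α → ℂ) x) :
    Separating S ψ := by
  intro v hv w hw hvw hwv
  filter_upwards [hψ v, hψ w, hφ v hv w hw hvw hwv] with x hψv hψw hφvw
  simp only [Pi.mul_apply, Pi.zero_apply] at hφvw ⊢
  rcases hψv with hψv | hψv
  · rw [hψv, zero_mul]
  rcases hψw with hψw | hψw
  · rw [hψw, mul_zero]
  rwa [hψv, hψw]

end

theorem ContinuousLinearMap.apply_mem_closure_span_image {R E F : Type*} [Semiring R]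
    [TopologicalSpace E] [AddCommMonoid E] [Module R E]
    [TopologicalSpace F] [AddCommMonoid F] [Module R F]
    {s : Set E} (hs : Dense (Submodule.span R s : Set E)) (T : E →L[R] F) (x : E) :
    T x ∈ closure (Submodule.span R (T '' s) : Set F) :=
  map_mem_closure T.continuous (hs x) fun _ hy =>
    Submodule.apply_mem_span_image_of_mem_span (T : E →ₗ[R] F) hy

theorem stmt11_general {α : Type*} [MeasurableSpace α] (μ : Measure α) (p : ℝ)
    [Fact (1 ≤ ENNReal.ofReal p)]
    (S : Set (List ℕ)) (φ : List ℕ → Lp ℂ (ENNReal.ofReal p) μ)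
    (hsum : Summative S φ) (hsep : Separating S φ)
    (hdense : Dense ((Submodule.span ℂ (φ '' S) :
      Submodule ℂ (Lp ℂ (ENNReal.ofReal p) μ)) : Set (Lp ℂ (ENNReal.ofReal p) μ)))
    (M N : Submodule ℂ (Lp ℂ (ENNReal.ofReal p) μ))
    (hdisj : ∀ f ∈ M, ∀ g ∈ N, (f : α → ℂ) * (g : α → ℂ) =ᵐ[μ] 0)
    (hsup : M ⊔ N = ⊤)
    (P : Lp ℂ (ENNReal.ofReal p) μ →ₗ[ℂ] Lp ℂ (ENNReal.ofReal p) μ)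
    (hPM : ∀ f ∈ M, P f = f) (hPN : ∀ f ∈ N, P f = 0) :
    Summative S (fun ν => P (φ ν)) ∧ Separating S (fun ν => P (φ ν)) ∧
    ∀ f ∈ M, f ∈ closure ((Submodule.span ℂ ((fun ν => P (φ ν)) '' S) :
      Submodule ℂ (Lp ℂ (ENNReal.ofReal p) μ)) : Set (Lp ℂ (ENNReal.ofReal p) μ)) := by
  have hP := Lp.projection_ae_eq_zero_or_eq hdisj hsup hPM hPN
  let P' := P.mkContinuous 1 fun f => by
    rw [one_mul]; exact Lp.norm_le_of_ae_eq_zero_or_eq (hP f)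
  refine ⟨hsum.map P', hsep.of_ae_eq_zero_or_eq fun ν => hP (φ ν), fun f hf => ?_⟩
  have hclosure := P'.apply_mem_closure_span_image hdense f
  rwa [Set.image_image, LinearMap.mkContinuous_apply, hPM f hf] at hclosure

/-- If `φ : S → L^p(Ω)` is summative and separating with linearly dense range, and `M`, `N`
are disjointly supported complementary subspaces with projection `P_M`, then `P_M ∘ φ` is
summative, separating, and its range has dense linear span in `M`. -/
theorem stmt11 {α : Type*} [MeasurableSpace α] (μ : Measure α) (p : ℝ) (hp : 1 ≤ p)
    [Fact (1 ≤ ENNReal.ofReal p)]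
    (S : Set (List ℕ)) (hS : IsTree S) (φ : List ℕ → Lp ℂ (ENNReal.ofReal p) μ)
    (hsum : Summative S φ) (hsep : Separating S φ)
    (hdense : Dense ((Submodule.span ℂ (φ '' S) :
      Submodule ℂ (Lp ℂ (ENNReal.ofReal p) μ)) : Set (Lp ℂ (ENNReal.ofReal p) μ)))
    (M N : Submodule ℂ (Lp ℂ (ENNReal.ofReal p) μ))
    (hdisj : ∀ f ∈ M, ∀ g ∈ N, (f : α → ℂ) * (g : α → ℂ) =ᵐ[μ] 0)
    (hinf : M ⊓ N = ⊥) (hsup : M ⊔ N = ⊤)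
    (P : Lp ℂ (ENNReal.ofReal p) μ →ₗ[ℂ] Lp ℂ (ENNReal.ofReal p) μ)
    (hPM : ∀ f ∈ M, P f = f) (hPN : ∀ f ∈ N, P f = 0) (hPran : ∀ f, P f ∈ M) :
    Summative S (fun ν => P (φ ν)) ∧ Separating S (fun ν => P (φ ν)) ∧
    ∀ f ∈ M, f ∈ closure ((Submodule.span ℂ ((fun ν => P (φ ν)) '' S) :
      Submodule ℂ (Lp ℂ (ENNReal.ofReal p) μ)) : Set (Lp ℂ (ENNReal.ofReal p) μ)) :=
  stmt11_general μ p S φ hsum hsep hdense M N hdisj hsup P hPM hPN
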